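/- Let ρ be a nonzero positive semidefinite complex matrix, let α > 0, write S := ρ^{α/2} (so tr(S²) = tr(ρ^α) > 0), let Ω be a nonempty finite index set and (O_x)_{x ∈ Ω} matrices of the same size as ρ. Define the Rényi-α correlators R(O) := tr(S O S O†)/tr(S²). Then (1/|Ω|²) Σ_{x,y ∈ Ω} R(O_x O_y†) ≥ ( (1/|Ω|) Σ_{x ∈ Ω} R(O_x) )², where both sides are real numbers. -/

import Mathlib

noncomputable section

open scoped Matrix Kronecker ComplexOrder

/-- The positive semidefinite square root of a matrix (defaults to `0` if not PSD). -/
noncomputable def matSqrt {n : Type*} [Fintype n] [DecidableEq n] (M : Matrix n n ℂ) :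
    Matrix n n ℂ :=
  open scoped Classical in
  if h : M.PosSemidef then
    (h.1.eigenvectorUnitary : Matrix n n ℂ) *
      Matrix.diagonal ((↑) ∘ (√·) ∘ h.1.eigenvalues) *
      (star h.1.eigenvectorUnitary : Matrix n n ℂ)
  else 0

/-- The fidelity `F(ρ, σ) = tr √(√ρ σ √ρ)` of two PSD matrices. -/
noncomputable def fidelity {n : Type*} [Fintype n] [DecidableEq n] (ρ σ : Matrix n n ℂ) : ℝ :=
  (matSqrt (matSqrt ρ * σ * matSqrt ρ)).trace.re

/-- The ℓ²→ℓ² operator norm of a complex matrix. -/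
noncomputable def opNorm {m n : Type*} [Fintype m] [Fintype n] [DecidableEq n]
    (M : Matrix m n ℂ) : ℝ :=
  ‖(Matrix.toEuclideanLin.trans LinearMap.toContinuousLinearMap) M‖

/-- Partial trace over the second tensor factor. -/
noncomputable def ptraceB {A B : Type*} [Fintype B]
    (ρ : Matrix (A × B) (A × B) ℂ) : Matrix A A ℂ :=
  Matrix.of fun a a' => ∑ b : B, ρ (a, b) (a', b)


/-- Real power of a matrix via the spectral decomposition (defaults to `0` if not Hermitian). -/
noncomputable def matRpow {n : Type*} [Fintype n] [DecidableEq n]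
    (M : Matrix n n ℂ) (β : ℝ) : Matrix n n ℂ :=
  open scoped Classical in
  if h : M.IsHermitian then
    (h.eigenvectorUnitary : Matrix n n ℂ) *
      Matrix.diagonal (fun i => (((h.eigenvalues i) ^ β : ℝ) : ℂ)) *
      (star h.eigenvectorUnitary : Matrix n n ℂ)
  else 0

/-! With `Q := ∑ₓ Oₓᴴ S Oₓ`, cyclicity of the trace turns the two-point sum into `tr (Q Q)` and
the one-point sum into `tr (Q S)`. Since `S` and hence `Q` are Hermitian, Cauchy–Schwarz for the
Hilbert–Schmidt inner product gives `tr (Q S)² ≤ tr (Q Q) tr (S S)`, and dividing by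
`|Ω|² tr (S S)²` is the claim. -/

lemma isHermitian_matRpow {n : Type*} [Fintype n] [DecidableEq n] (M : Matrix n n ℂ) (β : ℝ) :
    (matRpow M β).IsHermitian := by
  unfold matRpow
  split_ifs
  · exact Matrix.isHermitian_mul_mul_conjTranspose _
      (Matrix.isHermitian_diagonal_iff.mpr fun i => Complex.conj_ofReal _)
  · exact Matrix.isHermitian_zero

namespace Matrix

section

variable {𝕜 n : Type*} [RCLike 𝕜] [Fintype n]

theorem norm_trace_mul_conjTranspose_sq_le (A B : Matrix n n 𝕜) :
    ‖(A * Bᴴ).trace‖ ^ 2 ≤ RCLike.re (A * Aᴴ).trace * RCLike.re (B * Bᴴ).trace := by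
  classical
  -- the Hilbert–Schmidt inner product `⟪X, Y⟫ = tr (Y * 1 * Xᴴ)`
  let := (1 : Matrix n n 𝕜).toMatrixSeminormedAddCommGroup PosSemidef.one
  let := (1 : Matrix n n 𝕜).toMatrixInnerProductSpace PosSemidef.one
  have h := inner_mul_inner_self_le (𝕜 := 𝕜) A B
  change ‖(B * 1 * Aᴴ).trace‖ * ‖(A * 1 * Bᴴ).trace‖ ≤
    RCLike.re (A * 1 * Aᴴ).trace * RCLike.re (B * 1 * Bᴴ).trace at h
  simp only [Matrix.mul_one] at h
  rwa [← norm_star, ← trace_conjTranspose, conjTranspose_mul, conjTranspose_conjTranspose, ← sq] at h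

theorem trace_mul_sq_le_of_isHermitian {A B : Matrix n n 𝕜} (hA : A.IsHermitian)
    (hB : B.IsHermitian) :
    RCLike.re (A * B).trace ^ 2 ≤ RCLike.re (A * A).trace * RCLike.re (B * B).trace := by
  have h := norm_trace_mul_conjTranspose_sq_le A B
  rw [hA.eq, hB.eq] at h
  exact (sq_le_sq' (neg_le_of_abs_le (RCLike.abs_re_le_norm _)) (RCLike.re_le_norm _)).trans h

theorem IsHermitian.re_trace_mul_self_nonneg {A : Matrix n n 𝕜} (hA : A.IsHermitian) :
    0 ≤ RCLike.re (A * A).trace := by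
  simpa [hA.eq] using RCLike.nonneg_iff.mp (posSemidef_self_mul_conjTranspose A).trace_nonneg |>.1

end

section

variable {R n Ω : Type*} [CommSemiring R] [StarRing R] [Fintype n] [Fintype Ω]

theorem trace_mul_mul_mul_conjTranspose_mul_conjTranspose (S A B : Matrix n n R) :
    (S * (A * Bᴴ) * S * (A * Bᴴ)ᴴ).trace = (Aᴴ * S * A * (Bᴴ * S * B)).trace := by
  rw [conjTranspose_mul, conjTranspose_conjTranspose, ← Matrix.mul_assoc, trace_mul_comm]
  simp only [Matrix.mul_assoc]

theorem trace_mul_mul_mul_conjTranspose (S A : Matrix n n R) :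
    (S * A * S * Aᴴ).trace = (Aᴴ * S * A * S).trace := by
  rw [← trace_mul_comm]
  simp only [Matrix.mul_assoc]

theorem sum_sum_trace_mul_mul_mul_conjTranspose_mul_conjTranspose (S : Matrix n n R)
    (O : Ω → Matrix n n R) :
    ∑ x, ∑ y, (S * (O x * (O y)ᴴ) * S * (O x * (O y)ᴴ)ᴴ).trace =
      ((∑ x, (O x)ᴴ * S * O x) * ∑ y, (O y)ᴴ * S * O y).trace := by
  simp only [Finset.sum_mul_sum, trace_sum, trace_mul_mul_mul_conjTranspose_mul_conjTranspose]

theorem sum_trace_mul_mul_mul_conjTranspose (S : Matrix n n R) (O : Ω → Matrix n n R) :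
    ∑ x, (S * O x * S * (O x)ᴴ).trace = ((∑ x, (O x)ᴴ * S * O x) * S).trace := by
  simp only [Finset.sum_mul, trace_sum, trace_mul_mul_mul_conjTranspose]

end

end Matrix

theorem div_sq_le_div_of_sq_le_mul {a b T : ℝ} (hT : 0 ≤ T) (h : b ^ 2 ≤ a * T) :
    (b / T) ^ 2 ≤ a / T := by
  rcases hT.eq_or_lt with rfl | hT
  · simp
  · rw [div_pow, div_le_div_iff₀ (by positivity) hT]
    nlinarith

theorem avg_two_point_renyi_ge_sq_avg_one_point_renyi_general
    {n : Type*} [Fintype n] [DecidableEq n]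
    (ρ : Matrix n n ℂ)
    (α : ℝ)
    (S : Matrix n n ℂ) (hS : S = matRpow ρ (α / 2))
    {Ω : Type*} [Fintype Ω] (O : Ω → Matrix n n ℂ) :
    ((1 : ℝ) / (Fintype.card Ω) ^ 2) *
        ∑ x : Ω, ∑ y : Ω,
          ((S * (O x * (O y)ᴴ) * S * (O x * (O y)ᴴ)ᴴ).trace.re / (S * S).trace.re) ≥
      (((1 : ℝ) / Fintype.card Ω) *
          ∑ x : Ω, ((S * O x * S * (O x)ᴴ).trace.re / (S * S).trace.re)) ^ 2 := by
  have hS_herm : S.IsHermitian := hS ▸ isHermitian_matRpow ρ (α / 2)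
  set Q := ∑ x, (O x)ᴴ * S * O x
  have hQ_herm : Q.IsHermitian :=
    isSelfAdjoint_sum _ fun x _ => Matrix.isHermitian_conjTranspose_mul_mul (O x) hS_herm
  have two_point : ∑ x, ∑ y, (S * (O x * (O y)ᴴ) * S * (O x * (O y)ᴴ)ᴴ).trace.re /
      (S * S).trace.re = (Q * Q).trace.re / (S * S).trace.re := by
    simp only [← Finset.sum_div, ← Complex.re_sum]
    rw [Matrix.sum_sum_trace_mul_mul_mul_conjTranspose_mul_conjTranspose]
  have one_point : ∑ x, (S * O x * S * (O x)ᴴ).trace.re / (S * S).trace.re =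
      (Q * S).trace.re / (S * S).trace.re := by
    rw [← Finset.sum_div, ← Complex.re_sum, Matrix.sum_trace_mul_mul_mul_conjTranspose]
  rw [two_point, one_point, ge_iff_le, mul_pow, one_div_pow]
  gcongr
  exact div_sq_le_div_of_sq_le_mul hS_herm.re_trace_mul_self_nonneg
    (Matrix.trace_mul_sq_le_of_isHermitian hQ_herm hS_herm)

/-- **Corollary (averaged two-point Rényi-α correlator dominates the square of the averaged
one-point Rényi-α correlator)**. -/
theorem avg_two_point_renyi_ge_sq_avg_one_point_renyi
    {n : Type*} [Fintype n] [DecidableEq n]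
    (ρ : Matrix n n ℂ) (hρ : ρ.PosSemidef) (hρ0 : ρ ≠ 0)
    (α : ℝ) (hα : 0 < α)
    (S : Matrix n n ℂ) (hS : S = matRpow ρ (α / 2))
    {Ω : Type*} [Fintype Ω] [Nonempty Ω] (O : Ω → Matrix n n ℂ) :
    ((1 : ℝ) / (Fintype.card Ω) ^ 2) *
        ∑ x : Ω, ∑ y : Ω,
          ((S * (O x * (O y)ᴴ) * S * (O x * (O y)ᴴ)ᴴ).trace.re / (S * S).trace.re) ≥
      (((1 : ℝ) / Fintype.card Ω) *
          ∑ x : Ω, ((S * O x * S * (O x)ᴴ).trace.re / (S * S).trace.re)) ^ 2 :=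
  avg_two_point_renyi_ge_sq_avg_one_point_renyi_general ρ α S hS O
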